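/- Let k ≥ 2 be an integer, let G be a graph, and let e be an edge joining two nonadjacent vertices of G. Then r(G + e, P_k) ≤ r(G, P_k) + k − 1, where G + e is the graph obtained from G by adding the edge e. -/

import Mathlib

open SimpleGraph
open scoped Classical

/-- `G` contains a copy of `H` as a subgraph. -/
def Contains {α β : Type*} (G : SimpleGraph α) (H : SimpleGraph β) : Prop :=
  ∃ f : β ↪ α, ∀ a b : β, H.Adj a b → G.Adj (f a) (f b)

/-- Every graph on `N` vertices contains `H₁`, or its complement contains `H₂`. -/
def RamseyProp (N : ℕ) {α β : Type*} (H₁ : SimpleGraph α) (H₂ : SimpleGraph β) : Prop :=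
  ∀ F : SimpleGraph (Fin N), Contains F H₁ ∨ Contains Fᶜ H₂

/-- The Ramsey number `r(H₁, H₂)`. -/
noncomputable def ramseyNumber {α β : Type*} (H₁ : SimpleGraph α) (H₂ : SimpleGraph β) : ℕ :=
  sInf {N : ℕ | 0 < N ∧ RamseyProp N H₁ H₂}

section Aux
variable {V : Type*} [DecidableEq V]

omit [DecidableEq V] in
lemma adj_of_pairwise' {R : V → V → Prop} (hsymm : Symmetric R) {l : List V}
    (hp : l.Pairwise R) {i j : Fin l.length} (hij : i ≠ j) :
    R (l.get i) (l.get j) := by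
  rcases lt_trichotomy i j with h | h | h
  · exact List.pairwise_iff_get.mp hp i j h
  · exact absurd h hij
  · exact hsymm (List.pairwise_iff_get.mp hp j i h)

lemma exists_chain_list' (H : SimpleGraph V) (S : Finset V) (d : ℕ)
    (hdeg : ∀ u ∈ S, d ≤ (S.filter (fun v => H.Adj u v)).card)
    (hS : S.Nonempty) :
    ∀ n, 1 ≤ n → n ≤ d + 1 →
      ∃ l : List V, l.Nodup ∧ l.Chain' H.Adj ∧ (∀ x ∈ l, x ∈ S) ∧ l.length = n := by
  intro n
  induction n with
  | zero => omega
  | succ n ih =>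
    intro _ hn
    rcases Nat.eq_zero_or_pos n with h0 | h0
    · obtain ⟨u, hu⟩ := hS
      subst h0
      exact ⟨[u], List.nodup_singleton u, List.isChain_singleton u, by simpa using hu, rfl⟩
    · obtain ⟨l, hnd, hch, hmem, hlen⟩ := ih h0 (by omega)
      cases l with
      | nil => simp at hlen; omega
      | cons u t =>
        have hu : u ∈ S := hmem u List.mem_cons_self
        have hucard : ((u :: t).toFinset).card = n := by
          rw [List.toFinset_card_of_nodup hnd]; simpa using hlen
        have hex : ∃ v, v ∈ S ∧ H.Adj u v ∧ v ∉ (u :: t) := by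
          by_contra hcon
          push_neg at hcon
          have hsub : S.filter (fun v => H.Adj u v) ⊆ (u :: t).toFinset.erase u := by
            intro v hv
            simp only [Finset.mem_filter] at hv
            refine Finset.mem_erase.mpr ⟨fun h => H.irrefl (h ▸ hv.2), ?_⟩
            rw [List.mem_toFinset]
            exact hcon v hv.1 hv.2
          have h1 := Finset.card_le_card hsub
          have h2 : ((u :: t).toFinset.erase u).card = n - 1 := by
            rw [Finset.card_erase_of_mem (by simp), hucard]
          have h3 := hdeg u hu
          omega
        obtain ⟨v, hvS, hvadj, hvnot⟩ := hex
        refine ⟨v :: u :: t, List.nodup_cons.mpr ⟨hvnot, hnd⟩,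
          List.isChain_cons_cons.mpr ⟨hvadj.symm, hch⟩, ?_, ?_⟩
        · intro x hx
          rcases List.mem_cons.mp hx with rfl | hx
          · exact hvS
          · exact hmem x hx
        · simp only [List.length_cons] at hlen ⊢; omega

lemma contains_path' {k : ℕ} (H : SimpleGraph V) (S : Finset V)
    (hk : 1 ≤ k) (hS : S.Nonempty)
    (hdeg : ∀ u ∈ S, k - 1 ≤ (S.filter (fun v => H.Adj u v)).card) :
    Contains H (pathGraph k) := by
  obtain ⟨l, hnd, hch, hmem, hlen⟩ :=
    exists_chain_list' H S (k - 1) hdeg hS k hk (by omega)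
  have hinj : Function.Injective l.get := List.nodup_iff_injective_get.mp hnd
  have key : ∀ (x y : Fin l.length), x.val + 1 = y.val → H.Adj (l.get x) (l.get y) := by
    intro x y hxy
    have h' : (x : ℕ) < l.length - 1 := by omega
    have h2 := List.isChain_iff_getElem.mp hch x.val (by omega)
    have hx : (⟨x.val, by omega⟩ : Fin l.length) = x := rfl
    have hy : y = ⟨x.val + 1, by omega⟩ := Fin.ext hxy.symm
    rw [hy]; exact h2
  refine ⟨⟨fun i => l.get (Fin.cast hlen.symm i), ?_⟩, ?_⟩
  · intro i j hij
    exact Fin.cast_injective hlen.symm (hinj hij)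
  · intro i j hadj
    rw [pathGraph_adj] at hadj
    rcases hadj with h | h
    · exact key _ _ (by simpa using h)
    · exact (key _ _ (by simpa using h)).symm

lemma exists_small_degree' {k : ℕ} (H : SimpleGraph V) (hk : 2 ≤ k)
    (hnp : ¬ Contains H (pathGraph k)) (S : Finset V) (hS : S.Nonempty) :
    ∃ u ∈ S, (S.filter (fun v => H.Adj u v)).card ≤ k - 2 := by
  by_contra hcon
  push_neg at hcon
  exact hnp (contains_path' H S (by omega) hS (fun u hu => by have := hcon u hu; omega))

lemma exists_clique_list' {k : ℕ} (F : SimpleGraph V) (hk : 2 ≤ k)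
    (hnp : ¬ Contains Fᶜ (pathGraph k)) :
    ∀ (m : ℕ) (S : Finset V), m * (k - 1) + 1 ≤ S.card + (k - 1) →
      ∃ l : List V, l.Nodup ∧ l.Pairwise F.Adj ∧ (∀ x ∈ l, x ∈ S) ∧ l.length = m := by
  intro m
  induction m with
  | zero => intro S _; exact ⟨[], by simp, by simp, by simp, rfl⟩
  | succ m ih =>
    intro S hcard
    rw [Nat.succ_mul] at hcard
    have h1 : m * (k - 1) + 1 ≤ S.card := by omega
    have hSne : S.Nonempty := Finset.card_pos.mp (by omega)
    obtain ⟨u, huS, hudeg⟩ := exists_small_degree' Fᶜ hk hnp S hSne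
    set S' := S.filter (fun v => F.Adj u v) with hS'
    have hsub : S ⊆ insert u ((S.filter (fun v => Fᶜ.Adj u v)) ∪ S') := by
      intro v hv
      by_cases hvu : v = u
      · simp [hvu]
      · rcases em (F.Adj u v) with h | h
        · exact Finset.mem_insert_of_mem (Finset.mem_union_right _
            (Finset.mem_filter.mpr ⟨hv, h⟩))
        · exact Finset.mem_insert_of_mem (Finset.mem_union_left _
            (Finset.mem_filter.mpr ⟨hv, (F.compl_adj u v).mpr ⟨fun h' => hvu h'.symm, h⟩⟩))
    have hc1 := Finset.card_le_card hsub
    have hc2 := Finset.card_insert_le u ((S.filter (fun v => Fᶜ.Adj u v)) ∪ S')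
    have hc3 := Finset.card_union_le (S.filter (fun v => Fᶜ.Adj u v)) S'
    have hudeg' : (S.filter (fun v => Fᶜ.Adj u v)).card ≤ k - 2 := by
      rw [← Finset.filter_congr_decidable S (fun v => Fᶜ.Adj u v) (fun v => Classical.propDecidable _)]
      exact hudeg
    have hS'card : m * (k - 1) + 1 ≤ S'.card + (k - 1) := by omega
    obtain ⟨l, hnd, hpw, hmem, hlen⟩ := ih S' hS'card
    have hul : ∀ x ∈ l, F.Adj u x := fun x hx => (Finset.mem_filter.mp (hmem x hx)).2
    refine ⟨u :: l, List.nodup_cons.mpr ⟨fun h => F.irrefl (hul u h), hnd⟩,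
      List.pairwise_cons.mpr ⟨hul, hpw⟩, ?_, by simp [hlen]⟩
    intro x hx
    rcases List.mem_cons.mp hx with rfl | hx
    · exact huS
    · exact Finset.mem_of_mem_filter x (hmem x hx)

end Aux

lemma ramsey_exists' {α : Type*} [Fintype α] (G : SimpleGraph α) (k : ℕ) (hk : 2 ≤ k) :
    ∃ N, 0 < N ∧ RamseyProp N G (pathGraph k) := by
  refine ⟨Fintype.card α * (k - 1) + 1, Nat.succ_pos _, ?_⟩
  intro F
  by_cases hc : Contains Fᶜ (pathGraph k)
  · exact Or.inr hc
  · left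
    obtain ⟨l, hnd, hpw, -, hlen⟩ := exists_clique_list' F hk hc (Fintype.card α) Finset.univ
      (by rw [Finset.card_univ, Fintype.card_fin]; omega)
    have hinj : Function.Injective l.get := List.nodup_iff_injective_get.mp hnd
    set e := Fintype.equivFin α with he
    refine ⟨⟨fun x => l.get (Fin.cast hlen.symm (e x)), ?_⟩, ?_⟩
    · intro x y hxy
      exact e.injective (Fin.cast_injective hlen.symm (hinj hxy))
    · intro x y hxy
      refine adj_of_pairwise' (fun _ _ h => h.symm) hpw ?_
      intro h
      exact hxy.ne (e.injective (Fin.cast_injective hlen.symm h))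

theorem stmt14 {α : Type*} [Fintype α] (k : ℕ) (hk : 2 ≤ k)
    (G : SimpleGraph α) (a b : α) (hab : a ≠ b) (hnadj : ¬ G.Adj a b) :
    ramseyNumber (G ⊔ fromEdgeSet {s(a, b)}) (pathGraph k)
      ≤ ramseyNumber G (pathGraph k) + k - 1 := by
  have hne : {N : ℕ | 0 < N ∧ RamseyProp N G (pathGraph k)}.Nonempty := by
    obtain ⟨N, h1, h2⟩ := ramsey_exists' G k hk
    exact ⟨N, h1, h2⟩
  obtain ⟨hrpos, hrR⟩ := Nat.sInf_mem hne
  set r := ramseyNumber G (pathGraph k) with hrdef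
  have hmem : (r + k - 1) ∈ {N : ℕ | 0 < N ∧
      RamseyProp N (G ⊔ fromEdgeSet {s(a, b)}) (pathGraph k)} := by
    refine ⟨by omega, ?_⟩
    intro F
    by_cases hc : Contains Fᶜ (pathGraph k)
    · exact Or.inr hc
    left
    have hNpos : 0 < r + k - 1 := by omega
    obtain ⟨u, -, hudeg⟩ := exists_small_degree' Fᶜ hk hc Finset.univ
      ⟨⟨0, hNpos⟩, Finset.mem_univ _⟩
    set S' := Finset.univ.filter (fun v => F.Adj u v) with hS'def
    have hS'card : r ≤ S'.card := by
      have hsub : (Finset.univ : Finset (Fin (r + k - 1))) ⊆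
          insert u ((Finset.univ.filter (fun v => Fᶜ.Adj u v)) ∪ S') := by
        intro v _
        by_cases hvu : v = u
        · simp [hvu]
        · rcases em (F.Adj u v) with h | h
          · exact Finset.mem_insert_of_mem (Finset.mem_union_right _
              (Finset.mem_filter.mpr ⟨Finset.mem_univ _, h⟩))
          · exact Finset.mem_insert_of_mem (Finset.mem_union_left _
              (Finset.mem_filter.mpr ⟨Finset.mem_univ _,
                (F.compl_adj u v).mpr ⟨fun h' => hvu h'.symm, h⟩⟩))
      have hc1 := Finset.card_le_card hsub
      have hc2 := Finset.card_insert_le u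
        ((Finset.univ.filter (fun v => Fᶜ.Adj u v)) ∪ S')
      have hc3 := Finset.card_union_le (Finset.univ.filter (fun v => Fᶜ.Adj u v)) S'
      have hc4 : (Finset.univ : Finset (Fin (r + k - 1))).card = r + k - 1 := by
        rw [Finset.card_univ, Fintype.card_fin]
      have hudeg' : (Finset.univ.filter (fun v => Fᶜ.Adj u v)).card ≤ k - 2 := by
        rw [← Finset.filter_congr_decidable Finset.univ (fun v => Fᶜ.Adj u v)
          (fun v => Classical.propDecidable _)]
        exact hudeg
      omega
    obtain ⟨T, hTsub, hTcard⟩ := Finset.exists_subset_card_eq hS'card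
    set g : Fin r → Fin (r + k - 1) := fun i => ((T.orderIsoOfFin hTcard) i : Fin (r + k - 1))
      with hgdef
    have hginj : Function.Injective g := by
      intro i j hij
      exact (T.orderIsoOfFin hTcard).injective (Subtype.ext hij)
    have hgS' : ∀ i, g i ∈ S' := fun i => hTsub ((T.orderIsoOfFin hTcard) i).2
    have hgadj : ∀ i, F.Adj u (g i) := fun i => (Finset.mem_filter.mp (hgS' i)).2
    have hug : ∀ i, g i ≠ u := fun i h => F.irrefl (h ▸ hgadj i)
    rcases hrR (SimpleGraph.comap g F) with hG | hP
    · obtain ⟨φ, hφ⟩ := hG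
      refine ⟨⟨fun x => if x = b then u else g (φ x), ?_⟩, ?_⟩
      · intro x y hxy
        simp only at hxy
        by_cases hx : x = b
        · by_cases hy : y = b
          · rw [hx, hy]
          · rw [if_pos hx, if_neg hy] at hxy
            exact absurd hxy.symm (hug _)
        · by_cases hy : y = b
          · rw [if_neg hx, if_pos hy] at hxy
            exact absurd hxy (hug _)
          · rw [if_neg hx, if_neg hy] at hxy
            exact φ.injective (hginj hxy)
      · intro x y hxy
        show F.Adj (if x = b then u else g (φ x)) (if y = b then u else g (φ y))
        by_cases hx : x = b
        · by_cases hy : y = b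
          · exact absurd (hx.trans hy.symm) hxy.ne
          · rw [if_pos hx, if_neg hy]
            exact hgadj (φ y)
        · by_cases hy : y = b
          · rw [if_neg hx, if_pos hy]
            exact (hgadj (φ x)).symm
          · rw [if_neg hx, if_neg hy]
            apply hφ
            rcases (SimpleGraph.sup_adj _ _ _ _).mp hxy with h | h
            · exact h
            · exfalso
              rw [SimpleGraph.fromEdgeSet_adj] at h
              have h2 := h.1
              simp only [Set.mem_singleton_iff, Sym2.eq, Sym2.rel_iff', Prod.mk.injEq,
                Prod.swap_prod_mk] at h2
              rcases h2 with ⟨rfl, rfl⟩ | ⟨rfl, rfl⟩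
              · exact hy rfl
              · exact hx rfl
    · exfalso
      apply hc
      obtain ⟨e0, he0⟩ := hP
      refine ⟨⟨fun i => g (e0 i), fun i j hij => e0.injective (hginj hij)⟩, ?_⟩
      intro i j h
      have h2 := he0 i j h
      rw [SimpleGraph.compl_adj] at h2
      refine (F.compl_adj _ _).mpr ⟨fun hh => h2.1 (hginj hh), ?_⟩
      intro hh
      exact h2.2 hh
  exact Nat.sInf_le hmem
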